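/- For fixed γ ∈ (0,α) and δ > 0, the period integral T_{γ,δ} = ∫_γ^{ζ(γ)} (δ - F_γ(v))/√(F_γ(v)(F_γ(v) - 2δ)) dv is finite, and lim_{δ→0⁺} T_{γ,δ} = ζ(γ) - γ. -/

import Mathlib

open Set Filter

private lemma aux_bound17 (u δ : ℝ) (hu : 0 < u) (hδ : 0 < δ) :
    (δ + u) / Real.sqrt (u * (u + 2 * δ)) ≤ 1 + Real.sqrt (δ / 2) / Real.sqrt u := by
  have h1 : u ≤ Real.sqrt (u * (u + 2 * δ)) := by
    calc u = Real.sqrt (u ^ 2) := (Real.sqrt_sq hu.le).symm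
      _ ≤ Real.sqrt (u * (u + 2 * δ)) := Real.sqrt_le_sqrt (by nlinarith)
  have h2 : Real.sqrt (u * (2 * δ)) ≤ Real.sqrt (u * (u + 2 * δ)) :=
    Real.sqrt_le_sqrt (by nlinarith)
  have hs2 : 0 < Real.sqrt (u * (2 * δ)) := Real.sqrt_pos.2 (by positivity)
  have hden : 0 < Real.sqrt (u * (u + 2 * δ)) := lt_of_lt_of_le hu h1
  have hA : u / Real.sqrt (u * (u + 2 * δ)) ≤ 1 := by
    rw [div_le_one hden]; exact h1
  have hB : δ / Real.sqrt (u * (u + 2 * δ)) ≤ δ / Real.sqrt (u * (2 * δ)) := by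
    gcongr
  have hu' : u ≠ 0 := hu.ne'
  have hδ' : δ ≠ 0 := hδ.ne'
  have e1 : δ / Real.sqrt (u * (2 * δ)) = Real.sqrt (δ / 2) / Real.sqrt u := by
    calc δ / Real.sqrt (u * (2 * δ))
        = Real.sqrt (δ ^ 2) / Real.sqrt (u * (2 * δ)) := by rw [Real.sqrt_sq hδ.le]
      _ = Real.sqrt (δ ^ 2 / (u * (2 * δ))) := (Real.sqrt_div (sq_nonneg δ) _).symm
      _ = Real.sqrt ((δ / 2) / u) := by congr 1; field_simp
      _ = Real.sqrt (δ / 2) / Real.sqrt u := Real.sqrt_div (by positivity) u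
  have hsplit : (δ + u) / Real.sqrt (u * (u + 2 * δ))
      = δ / Real.sqrt (u * (u + 2 * δ)) + u / Real.sqrt (u * (u + 2 * δ)) := add_div _ _ _
  rw [hsplit, ← e1]
  linarith

private lemma aux_tendsto17 (u : ℝ) (hu : 0 < u) :
    Tendsto (fun δ : ℝ => (δ + u) / Real.sqrt (u * (u + 2 * δ)))
      (nhdsWithin 0 (Set.Ioi 0)) (nhds 1) := by
  have h1 : Tendsto (fun δ : ℝ => δ + u) (nhds 0) (nhds u) := by
    simpa using (continuous_add_right u).tendsto (0 : ℝ)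
  have h2 : Tendsto (fun δ : ℝ => Real.sqrt (u * (u + 2 * δ))) (nhds 0) (nhds u) := by
    have hc : Continuous fun δ : ℝ => Real.sqrt (u * (u + 2 * δ)) :=
      Real.continuous_sqrt.comp
        (continuous_const.mul (continuous_const.add (continuous_const.mul continuous_id)))
    have := hc.tendsto (0 : ℝ)
    simpa [Real.sqrt_mul_self hu.le] using this
  have h3 := (h1.div h2 hu.ne').mono_left (nhdsWithin_le_nhds (s := Set.Ioi (0:ℝ)))
  have h4 : Tendsto (fun δ : ℝ => (δ + u) / Real.sqrt (u * (u + 2 * δ)))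
      (nhdsWithin 0 (Set.Ioi 0)) (nhds (u / u)) := h3
  rwa [div_self hu.ne'] at h4

theorem stmt_17 (α γ ζ : ℝ) (f F : ℝ → ℝ)
    (hα : α ∈ Set.Ioo (0:ℝ) 1) (hγ : γ ∈ Set.Ioo 0 α)
    (hlip : ∃ L, ∀ x y, |f x - f y| ≤ L * |x - y|)
    (hf0 : f 0 = 0) (hf1 : f 1 = 0) (hfα : f α = 0)
    (hfneg : ∀ s ∈ Set.Ioo 0 α, f s < 0)
    (hfpos : ∀ s ∈ Set.Ioo α 1, f s > 0)
    (hF : ∀ v, F v = ∫ s in (0:ℝ)..v, f s)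
    (hζ : ζ ∈ Set.Ioo α 1) (hγζ : γ < ζ) (hFζ : F ζ = F γ)
    (hFneg : ∀ v ∈ Set.Ioo γ ζ, F v < F γ) :
    (∀ δ > (0:ℝ), IntervalIntegrable
      (fun v => (δ - (F v - F γ)) /
        Real.sqrt ((F v - F γ) * ((F v - F γ) - 2 * δ)))
      MeasureTheory.volume γ ζ) ∧
    Tendsto (fun δ => ∫ v in γ..ζ, (δ - (F v - F γ)) /
        Real.sqrt ((F v - F γ) * ((F v - F γ) - 2 * δ)))
      (nhdsWithin 0 (Set.Ioi 0)) (nhds (ζ - γ)) := by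
  obtain ⟨hγ0, hγα⟩ := hγ
  obtain ⟨hαζ, hζ1⟩ := hζ
  -- continuity of f and F
  obtain ⟨L, hL⟩ := hlip
  have hfc : Continuous f :=
    (LipschitzWith.of_dist_le' (K := L) (fun x y => by
      rw [Real.dist_eq, Real.dist_eq]; exact hL x y)).continuous
  have hFc : Continuous F := by
    have h := intervalIntegral.continuous_primitive (μ := MeasureTheory.volume)
      (fun a b => hfc.intervalIntegrable a b) 0
    exact h.congr fun v => (hF v).symm
  have hFsub : ∀ a b : ℝ, F b - F a = ∫ s in a..b, f s := by
    intro a b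
    rw [hF b, hF a]
    exact intervalIntegral.integral_interval_sub_left
      (hfc.intervalIntegrable 0 b) (hfc.intervalIntegrable 0 a)
  have hfγ : f γ < 0 := hfneg γ ⟨hγ0, hγα⟩
  have hfζ : f ζ > 0 := hfpos ζ ⟨hαζ, hζ1⟩
  -- neighborhoods where f is bounded away from 0
  obtain ⟨ε₁, hε₁pos, hε₁⟩ : ∃ ε > 0, ∀ x, dist x γ < ε → f x < f γ / 2 := by
    have hopen : IsOpen (f ⁻¹' Set.Iio (f γ / 2)) := isOpen_Iio.preimage hfc
    have hmem : γ ∈ f ⁻¹' Set.Iio (f γ / 2) := by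
      simp only [Set.mem_preimage, Set.mem_Iio]; linarith
    obtain ⟨ε, hε, hball⟩ := Metric.isOpen_iff.1 hopen γ hmem
    exact ⟨ε, hε, fun x hx => hball (Metric.mem_ball.mpr hx)⟩
  obtain ⟨ε₂, hε₂pos, hε₂⟩ : ∃ ε > 0, ∀ x, dist x ζ < ε → f ζ / 2 < f x := by
    have hopen : IsOpen (f ⁻¹' Set.Ioi (f ζ / 2)) := isOpen_Ioi.preimage hfc
    have hmem : ζ ∈ f ⁻¹' Set.Ioi (f ζ / 2) := by
      simp only [Set.mem_preimage, Set.mem_Ioi]; linarith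
    obtain ⟨ε, hε, hball⟩ := Metric.isOpen_iff.1 hopen ζ hmem
    exact ⟨ε, hε, fun x hx => hball (Metric.mem_ball.mpr hx)⟩
  set η : ℝ := min (min (ε₁ / 2) (ε₂ / 2)) ((ζ - γ) / 3) with hη_def
  have hηpos : 0 < η := lt_min (lt_min (by linarith) (by linarith)) (by linarith)
  have hηε₁ : η < ε₁ :=
    lt_of_le_of_lt (le_trans (min_le_left _ _) (min_le_left _ _)) (by linarith)
  have hηε₂ : η < ε₂ :=
    lt_of_le_of_lt (le_trans (min_le_left _ _) (min_le_right _ _)) (by linarith)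
  have hη3 : η ≤ (ζ - γ) / 3 := min_le_right _ _
  -- lower bound for u(v) = F γ - F v near γ
  have hnearγ : ∀ v, γ ≤ v → v ≤ γ + η → (-(f γ) / 2) * (v - γ) ≤ F γ - F v := by
    intro v hv1 hv2
    have h1 : F γ - F v = ∫ s in γ..v, (-f s) := by
      rw [intervalIntegral.integral_neg, ← hFsub γ v]; ring
    rw [h1]
    have h2 : ∀ x ∈ Set.Icc γ v, -(f γ) / 2 ≤ -f x := by
      intro x hx
      have hd : dist x γ < ε₁ := by
        rw [Real.dist_eq, abs_of_nonneg (by linarith [hx.1])]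
        linarith [hx.2]
      linarith [hε₁ x hd]
    calc (-(f γ) / 2) * (v - γ) = ∫ _ in γ..v, (-(f γ) / 2) := by
          rw [intervalIntegral.integral_const, smul_eq_mul]; ring
      _ ≤ ∫ s in γ..v, (-f s) :=
          intervalIntegral.integral_mono_on hv1 intervalIntegrable_const
            ((hfc.neg).intervalIntegrable _ _) h2
  -- lower bound near ζ
  have hnearζ : ∀ v, ζ - η ≤ v → v ≤ ζ → (f ζ / 2) * (ζ - v) ≤ F γ - F v := by
    intro v hv1 hv2
    have h1 : F γ - F v = ∫ s in v..ζ, f s := by rw [← hFζ]; exact hFsub v ζ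
    rw [h1]
    have h2 : ∀ x ∈ Set.Icc v ζ, f ζ / 2 ≤ f x := by
      intro x hx
      have hd : dist x ζ < ε₂ := by
        rw [Real.dist_eq, abs_of_nonpos (by linarith [hx.2])]
        linarith [hx.1]
      linarith [hε₂ x hd]
    calc (f ζ / 2) * (ζ - v) = ∫ _ in v..ζ, (f ζ / 2) := by
          rw [intervalIntegral.integral_const, smul_eq_mul]; ring
      _ ≤ ∫ s in v..ζ, f s :=
          intervalIntegral.integral_mono_on hv2 intervalIntegrable_const
            (hfc.intervalIntegrable _ _) h2
  -- middle region
  have hKsub : Set.Icc (γ + η) (ζ - η) ⊆ Set.Ioo γ ζ := fun x hx =>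
    ⟨by linarith [hx.1], by linarith [hx.2]⟩
  have hKne : (Set.Icc (γ + η) (ζ - η)).Nonempty := ⟨γ + η, le_refl _, by linarith⟩
  obtain ⟨v₀, hv₀K, hv₀min⟩ :=
    isCompact_Icc.exists_isMinOn hKne ((continuous_const.sub hFc).continuousOn)
  have hm : 0 < F γ - F v₀ := sub_pos.2 (hFneg v₀ (hKsub hv₀K))
  set c : ℝ := min (min (-(f γ) / 2) (f ζ / 2)) ((F γ - F v₀) / (ζ - γ)) with hc_def
  have hc : 0 < c :=
    lt_min (lt_min (by linarith) (by linarith)) (div_pos hm (by linarith))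
  have hc1 : c ≤ -(f γ) / 2 := le_trans (min_le_left _ _) (min_le_left _ _)
  have hc2 : c ≤ f ζ / 2 := le_trans (min_le_left _ _) (min_le_right _ _)
  have hc3 : c ≤ (F γ - F v₀) / (ζ - γ) := min_le_right _ _
  -- global lower bound
  have hu_lb : ∀ v ∈ Set.Ioo γ ζ, c * min (v - γ) (ζ - v) ≤ F γ - F v := by
    intro v hv
    have ha : 0 < v - γ := sub_pos.2 hv.1
    have hb : 0 < ζ - v := sub_pos.2 hv.2
    have hminnn : 0 ≤ min (v - γ) (ζ - v) := le_min ha.le hb.le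
    rcases le_or_gt v (γ + η) with h1 | h1
    · calc c * min (v - γ) (ζ - v) ≤ (-(f γ) / 2) * (v - γ) :=
            mul_le_mul hc1 (min_le_left _ _) hminnn (by linarith)
        _ ≤ F γ - F v := hnearγ v hv.1.le h1
    rcases le_or_gt (ζ - η) v with h2 | h2
    · calc c * min (v - γ) (ζ - v) ≤ (f ζ / 2) * (ζ - v) :=
            mul_le_mul hc2 (min_le_right _ _) hminnn (by linarith)
        _ ≤ F γ - F v := hnearζ v h2 hv.2.le
    · calc c * min (v - γ) (ζ - v) ≤ ((F γ - F v₀) / (ζ - γ)) * (ζ - γ) := by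
            refine mul_le_mul hc3 ?_ hminnn ?_
            · linarith [min_le_right (v - γ) (ζ - v)]
            · exact div_nonneg hm.le (by linarith)
        _ = F γ - F v₀ := div_mul_cancel₀ _ (by linarith : ζ - γ ≠ 0)
        _ ≤ F γ - F v := isMinOn_iff.1 hv₀min v ⟨h1.le, h2.le⟩
  -- algebraic rewriting of the integrand
  have key : ∀ δ v : ℝ,
      (δ - (F v - F γ)) / Real.sqrt ((F v - F γ) * ((F v - F γ) - 2 * δ))
        = (δ + (F γ - F v)) / Real.sqrt ((F γ - F v) * ((F γ - F v) + 2 * δ)) := by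
    intro δ v
    rw [show δ - (F v - F γ) = δ + (F γ - F v) by ring,
        show (F v - F γ) * ((F v - F γ) - 2 * δ)
          = (F γ - F v) * ((F γ - F v) + 2 * δ) by ring]
  -- rpow helper
  have hrpow : ∀ x : ℝ, 0 < x → (Real.sqrt x)⁻¹ = x ^ (-(1 / 2) : ℝ) := by
    intro x hx
    rw [Real.rpow_neg hx.le, ← Real.sqrt_eq_rpow]
  -- the dominating function
  set B : ℝ → ℝ → ℝ := fun δ v => 1 + Real.sqrt (δ / 2) *
    ((Real.sqrt c)⁻¹ * ((v - γ) ^ (-(1 / 2) : ℝ) + (ζ - v) ^ (-(1 / 2) : ℝ))) with hB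
  have hB1 : IntervalIntegrable (fun v : ℝ => (v - γ) ^ (-(1 / 2) : ℝ))
      MeasureTheory.volume γ ζ := by
    have h := (intervalIntegral.intervalIntegrable_rpow' (a := 0) (b := ζ - γ) (r := -(1 / 2))
      (by norm_num)).comp_sub_right γ
    simpa using h
  have hB2 : IntervalIntegrable (fun v : ℝ => (ζ - v) ^ (-(1 / 2) : ℝ))
      MeasureTheory.volume γ ζ := by
    have h := (intervalIntegral.intervalIntegrable_rpow' (a := 0) (b := ζ - γ) (r := -(1 / 2))
      (by norm_num)).comp_sub_left ζ
    simpa using h.symm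
  have hBint : ∀ δ : ℝ, IntervalIntegrable (B δ) MeasureTheory.volume γ ζ := by
    intro δ
    exact intervalIntegrable_const.add (((hB1.add hB2).const_mul _).const_mul _)
  -- pointwise bound
  have hbound : ∀ δ : ℝ, 0 < δ → ∀ v ∈ Set.Ioo γ ζ,
      |(δ - (F v - F γ)) / Real.sqrt ((F v - F γ) * ((F v - F γ) - 2 * δ))| ≤ B δ v := by
    intro δ hδ v hv
    rw [key δ v]
    have hwpos : 0 < F γ - F v := sub_pos.2 (hFneg v hv)
    set w : ℝ := F γ - F v with hw
    have habs : |(δ + w) / Real.sqrt (w * (w + 2 * δ))|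
        = (δ + w) / Real.sqrt (w * (w + 2 * δ)) :=
      abs_of_nonneg (div_nonneg (by positivity) (Real.sqrt_nonneg _))
    rw [habs]
    have step1 := aux_bound17 w δ hwpos hδ
    have ha : 0 < v - γ := sub_pos.2 hv.1
    have hb : 0 < ζ - v := sub_pos.2 hv.2
    have hlb := hu_lb v hv
    have hminpos : 0 < min (v - γ) (ζ - v) := lt_min ha hb
    have hsw : Real.sqrt c * Real.sqrt (min (v - γ) (ζ - v)) ≤ Real.sqrt w := by
      rw [← Real.sqrt_mul hc.le]
      exact Real.sqrt_le_sqrt hlb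
    have hsmpos : 0 < Real.sqrt c * Real.sqrt (min (v - γ) (ζ - v)) := by
      apply mul_pos (Real.sqrt_pos.2 hc) (Real.sqrt_pos.2 hminpos)
    have step2 : Real.sqrt (δ / 2) / Real.sqrt w
        ≤ Real.sqrt (δ / 2) * ((Real.sqrt c)⁻¹ * (Real.sqrt (min (v - γ) (ζ - v)))⁻¹) := by
      have e2 : Real.sqrt (δ / 2) / (Real.sqrt c * Real.sqrt (min (v - γ) (ζ - v)))
          = Real.sqrt (δ / 2) * ((Real.sqrt c)⁻¹ * (Real.sqrt (min (v - γ) (ζ - v)))⁻¹) := by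
        ring
      rw [← e2]
      gcongr
      all_goals first | exact hsmpos | exact hsw | positivity
    have step3 : (Real.sqrt (min (v - γ) (ζ - v)))⁻¹
        ≤ (v - γ) ^ (-(1 / 2) : ℝ) + (ζ - v) ^ (-(1 / 2) : ℝ) := by
      rcases min_choice (v - γ) (ζ - v) with h | h
      · rw [h, hrpow _ ha]
        exact le_add_of_nonneg_right (Real.rpow_nonneg hb.le _)
      · rw [h, hrpow _ hb]
        exact le_add_of_nonneg_left (Real.rpow_nonneg ha.le _)
    have step4 : Real.sqrt (δ / 2) * ((Real.sqrt c)⁻¹ * (Real.sqrt (min (v - γ) (ζ - v)))⁻¹)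
        ≤ Real.sqrt (δ / 2) * ((Real.sqrt c)⁻¹ *
            ((v - γ) ^ (-(1 / 2) : ℝ) + (ζ - v) ^ (-(1 / 2) : ℝ))) := by
      apply mul_le_mul_of_nonneg_left _ (Real.sqrt_nonneg _)
      exact mul_le_mul_of_nonneg_left step3 (inv_nonneg.2 (Real.sqrt_nonneg c))
    simp only [hB]
    calc (δ + w) / Real.sqrt (w * (w + 2 * δ))
        ≤ 1 + Real.sqrt (δ / 2) / Real.sqrt w := step1
      _ ≤ 1 + Real.sqrt (δ / 2) *
            ((Real.sqrt c)⁻¹ * ((v - γ) ^ (-(1 / 2) : ℝ) + (ζ - v) ^ (-(1 / 2) : ℝ))) := by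
          linarith
  -- a.e. x ≠ ζ
  have hζnull : ∀ᵐ x : ℝ ∂MeasureTheory.volume, x ≠ ζ := by
    have h0 : MeasureTheory.volume ({ζ} : Set ℝ) = 0 := MeasureTheory.measure_singleton ζ
    rw [MeasureTheory.ae_iff]
    convert h0 using 2
    ext x
    simp
  -- measurability
  have hmeas : ∀ δ : ℝ, MeasureTheory.AEStronglyMeasurable
      (fun v => (δ - (F v - F γ)) / Real.sqrt ((F v - F γ) * ((F v - F γ) - 2 * δ)))
      (MeasureTheory.volume.restrict (Set.Ioc γ ζ)) := by
    intro δ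
    have h1 : Measurable fun v => δ - (F v - F γ) :=
      (continuous_const.sub (hFc.sub continuous_const)).measurable
    have h2 : Measurable fun v => Real.sqrt ((F v - F γ) * ((F v - F γ) - 2 * δ)) :=
      (Real.continuous_sqrt.comp (((hFc.sub continuous_const).mul
        ((hFc.sub continuous_const).sub continuous_const)))).measurable
    exact (h1.div h2).aestronglyMeasurable
  have huIoc : Set.uIoc γ ζ = Set.Ioc γ ζ := Set.uIoc_of_le hγζ.le
  constructor
  · -- integrability
    intro δ hδ
    constructor
    · refine MeasureTheory.Integrable.mono' ((hBint δ).1) (hmeas δ) ?_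
      refine (MeasureTheory.ae_restrict_iff' measurableSet_Ioc).2 ?_
      filter_upwards [hζnull] with x hxne hx
      have hxIoo : x ∈ Set.Ioo γ ζ := ⟨hx.1, lt_of_le_of_ne hx.2 hxne⟩
      simpa only [Real.norm_eq_abs] using hbound δ hδ x hxIoo
    · rw [Set.Ioc_eq_empty (by linarith : ¬ ζ < γ)]
      exact MeasureTheory.integrableOn_empty
  · -- the limit, by dominated convergence
    have hdct := intervalIntegral.tendsto_integral_filter_of_dominated_convergence
      (μ := MeasureTheory.volume) (a := γ) (b := ζ)
      (F := fun δ v => (δ - (F v - F γ)) /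
        Real.sqrt ((F v - F γ) * ((F v - F γ) - 2 * δ)))
      (f := fun _ => (1 : ℝ)) (l := nhdsWithin 0 (Set.Ioi 0)) (B 1)
      (by
        refine Filter.Eventually.of_forall fun δ => ?_
        rw [huIoc]
        exact hmeas δ)
      (by
        filter_upwards [Ioc_mem_nhdsGT_of_mem
          (by norm_num : (0:ℝ) ∈ Set.Ico (0:ℝ) 1)] with δ hδ
        filter_upwards [hζnull] with x hxne hxmem
        rw [huIoc] at hxmem
        have hxIoo : x ∈ Set.Ioo γ ζ := ⟨hxmem.1, lt_of_le_of_ne hxmem.2 hxne⟩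
        have hb1 := hbound δ hδ.1 x hxIoo
        have hmono : B δ x ≤ B 1 x := by
          simp only [hB]
          have h1 : Real.sqrt (δ / 2) ≤ Real.sqrt (1 / 2) :=
            Real.sqrt_le_sqrt (by linarith [hδ.2])
          have h2 : 0 ≤ (Real.sqrt c)⁻¹ *
              ((x - γ) ^ (-(1 / 2) : ℝ) + (ζ - x) ^ (-(1 / 2) : ℝ)) := by
            apply mul_nonneg (inv_nonneg.2 (Real.sqrt_nonneg c))
            exact add_nonneg (Real.rpow_nonneg (by linarith [hxIoo.1]) _)
              (Real.rpow_nonneg (by linarith [hxIoo.2]) _)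
          nlinarith [mul_le_mul_of_nonneg_right h1 h2]
        simpa only [Real.norm_eq_abs] using hb1.trans hmono)
      (hBint 1)
      (by
        filter_upwards [hζnull] with x hxne
        intro hxmem
        rw [huIoc] at hxmem
        have hxIoo : x ∈ Set.Ioo γ ζ := ⟨hxmem.1, lt_of_le_of_ne hxmem.2 hxne⟩
        have hw : 0 < F γ - F x := sub_pos.2 (hFneg x hxIoo)
        exact Tendsto.congr (fun δ => (key δ x).symm) (aux_tendsto17 (F γ - F x) hw))
    simpa using hdct
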